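/- (Tender operator lemma) Let ρ be a density operator on ℂ^D and X a positive semidefinite operator with X ≤ I and 1 − Tr(ρX) ≤ λ ≤ 1. Then ‖ρ − √X ρ √X‖₁ ≤ √(8λ), where √X is the positive semidefinite square root of X. -/

import Mathlib

/-!
Write `Y = √X` and `T = 1 - Y`, so that `ρ - YρY = Tρ + YρT`. The trace norm of this Hermitian
matrix is `Tr (S (ρ - YρY))` for the unitary `S = sign (ρ - YρY)`. Cauchy–Schwarz for the
semi-inner product `⟪A, B⟫ = Tr (B ρ Aᴴ)` bounds each of the two terms by `√Tr (ρ T²)`, using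
`Tr ρ = 1` and `Tr (ρ X) ≤ 1`. Finally `T² ≤ 1 - X`, since `(1 - √x)² ≤ 1 - x` on `[0, 1]`, so
`Tr (ρ T²) ≤ 1 - Tr (ρ X) ≤ λ`, and the trace norm is at most `2√λ ≤ √(8λ)`.
-/

open scoped ComplexOrder Matrix

namespace QIT

variable {d : ℕ}

/-- The positive semidefinite square root of a positive semidefinite matrix
(the definition `Matrix.PosSemidef.sqrt` of the older Mathlib, since removed). -/
noncomputable def _root_.Matrix.PosSemidef.sqrt {n : Type*} [Fintype n] [DecidableEq n]
    {A : Matrix n n ℂ} (hA : A.PosSemidef) : Matrix n n ℂ :=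
  hA.1.eigenvectorUnitary.1 * Matrix.diagonal ((↑) ∘ (√·) ∘ hA.1.eigenvalues) *
    (star hA.1.eigenvectorUnitary : Matrix n n ℂ)

/-- A density operator: positive semidefinite with trace 1. -/
def IsDensity (ρ : Matrix (Fin d) (Fin d) ℂ) : Prop :=
  ρ.PosSemidef ∧ ρ.trace = 1

/-- A pure state: a rank-one orthogonal projection. -/
def IsPure (ρ : Matrix (Fin d) (Fin d) ℂ) : Prop :=
  ρ.IsHermitian ∧ ρ * ρ = ρ ∧ ρ.rank = 1

/-- Trace norm of a matrix: `Tr √(Aᴴ A)`. -/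
noncomputable def traceNorm (A : Matrix (Fin d) (Fin d) ℂ) : ℝ :=
  ((Matrix.posSemidef_conjTranspose_mul_self A).sqrt.trace).re

end QIT

open scoped MatrixOrder

namespace CFC

variable {A : Type*} [Ring A] [StarRing A] [TopologicalSpace A] [Algebra ℝ A]
  [ContinuousFunctionalCalculus ℝ A IsSelfAdjoint] [PartialOrder A] [StarOrderedRing A]
  [NonnegSpectrumClass ℝ A] [IsTopologicalRing A] [T2Space A]

lemma one_sub_sqrt_sq_le {a : A} (ha₀ : 0 ≤ a) (ha₁ : a ≤ 1) :
    (1 - sqrt a) ^ 2 ≤ 1 - a := by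
  have hsa : IsSelfAdjoint a := ha₀.isSelfAdjoint
  have hlhs : (1 - sqrt a) ^ 2 = cfc (fun x : ℝ => (1 - √x) ^ 2) a := by
    rw [cfc_pow (fun x : ℝ => 1 - √x) 2 a, cfc_sub (fun _ : ℝ => 1) Real.sqrt a,
      cfc_const_one ℝ a, sqrt_eq_real_sqrt a, cfcₙ_eq_cfc]
  have hrhs : 1 - a = cfc (fun x : ℝ => 1 - x) a := by
    rw [cfc_sub (fun _ : ℝ => 1) (fun x : ℝ => x) a, cfc_const_one ℝ a, cfc_id' ℝ a]
  have hle : ∀ x ∈ spectrum ℝ a, 0 ≤ 1 - x :=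
    (cfc_nonneg_iff _ a).mp (hrhs ▸ sub_nonneg.mpr ha₁)
  rw [hlhs, hrhs, cfc_le_iff _ _ a]
  intro x hx
  have hx₀ : 0 ≤ x := spectrum_nonneg_of_nonneg ha₀ hx
  nlinarith [Real.sq_sqrt hx₀, Real.sqrt_nonneg x, Real.sqrt_le_one.mpr (by linarith [hle x hx])]

end CFC

namespace Matrix

lemma PosSemidef.sqrt_eq_cfcSqrt {n : Type*} [Fintype n] [DecidableEq n] {A : Matrix n n ℂ}
    (hA : A.PosSemidef) : hA.sqrt = CFC.sqrt A := by
  rw [CFC.sqrt_eq_real_sqrt A (nonneg_iff_posSemidef.mpr hA), cfcₙ_eq_cfc, hA.1.cfc_eq]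
  rfl

variable {n 𝕜 : Type*} [Fintype n] [DecidableEq n] [RCLike 𝕜]

open RCLike

lemma IsHermitian.exists_mem_unitary_mul_eq_abs {A : Matrix n n 𝕜} (hA : A.IsHermitian) :
    ∃ S ∈ unitary (Matrix n n 𝕜), S * A = CFC.abs A := by
  have hsa : IsSelfAdjoint A := hA
  -- `sgn 0 = 1` rather than `0`, so that `cfc sgn A` is unitary even when `A` is singular.
  let sgn : ℝ → ℝ := fun x => if x < 0 then -1 else 1
  have hcont : ContinuousOn sgn (spectrum ℝ A) := A.finite_real_spectrum.continuousOn _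
  have hsq : cfc sgn A * cfc sgn A = 1 := by
    rw [← cfc_mul sgn sgn A, ← cfc_const_one ℝ A]
    exact cfc_congr fun x _ => by simp only [sgn]; split_ifs <;> norm_num
  refine ⟨cfc sgn A, ?_, ?_⟩
  · rw [Unitary.mem_iff, (cfc_predicate sgn A).star_eq]
    exact ⟨hsq, hsq⟩
  · conv_lhs => arg 2; rw [← cfc_id' ℝ A]
    rw [← cfc_mul sgn (fun x => x) A, CFC.abs_eq_cfc_norm A]
    exact cfc_congr fun x _ => by
      simp only [sgn, Real.norm_eq_abs]
      split_ifs with h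
      · rw [abs_of_neg h]; ring
      · rw [abs_of_nonneg (not_lt.mp h)]; ring

lemma re_trace_mul_le_of_le {A B ρ : Matrix n n 𝕜} (hAB : A ≤ B) (hρ : ρ.PosSemidef) :
    re (ρ * A).trace ≤ re (ρ * B).trace := by
  have hρ₀ : 0 ≤ ρ := nonneg_iff_posSemidef.mpr hρ
  have hconj : 0 ≤ CFC.sqrt ρ * (B - A) * CFC.sqrt ρ :=
    conjugate_nonneg_of_nonneg (sub_nonneg.mpr hAB) (CFC.sqrt_nonneg ρ)
  have htrace : (ρ * (B - A)).trace = (CFC.sqrt ρ * (B - A) * CFC.sqrt ρ).trace := by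
    conv_lhs => rw [← CFC.sqrt_mul_sqrt_self ρ]
    rw [mul_assoc, trace_mul_comm, mul_assoc]
  have := (nonneg_iff.mp (nonneg_iff_posSemidef.mp hconj).trace_nonneg).1
  rw [← htrace, mul_sub, trace_sub, map_sub] at this
  linarith

lemma norm_trace_unitary_mul_mul_mul_le {ρ : Matrix n n 𝕜} (hρ : ρ.PosSemidef)
    {U : Matrix n n 𝕜} (hU : U ∈ unitary (Matrix n n 𝕜)) (P Q : Matrix n n 𝕜) :
    ‖(U * P * ρ * Q).trace‖ ≤ √(re (ρ * (Pᴴ * P)).trace) * √(re (ρ * (Q * Qᴴ)).trace) := by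
  let := ρ.toMatrixSeminormedAddCommGroup hρ
  let := ρ.toMatrixInnerProductSpace hρ
  -- The semi-inner product `⟪x, y⟫ = Tr (y ρ xᴴ)` induced by `ρ`.
  have hcs : ‖(U * P * ρ * Qᴴᴴ).trace‖ ≤ √(re (Qᴴ * ρ * Qᴴᴴ).trace) *
      √(re (U * P * ρ * (U * P)ᴴ).trace) :=
    norm_inner_le_norm (𝕜 := 𝕜) Qᴴ (U * P)
  have hU' : Uᴴ * U = 1 := Unitary.star_mul_self_of_mem hU
  have hP : (U * P * ρ * (U * P)ᴴ).trace = (ρ * (Pᴴ * P)).trace := by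
    rw [conjTranspose_mul, trace_mul_comm, mul_assoc, mul_assoc, ← mul_assoc Uᴴ, hU', one_mul,
      ← mul_assoc, trace_mul_comm]
  have hQ : (Qᴴ * ρ * Q).trace = (ρ * (Q * Qᴴ)).trace := by
    rw [trace_mul_comm, ← mul_assoc, trace_mul_comm]
  rw [conjTranspose_conjTranspose, hP, hQ] at hcs
  linarith [mul_comm √(re (ρ * (Q * Qᴴ)).trace) √(re (ρ * (Pᴴ * P)).trace)]

lemma re_trace_mul_one_sub_sqrt_sq_le {ρ X : Matrix n n 𝕜} (hρ : ρ.PosSemidef)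
    (hρtr : ρ.trace = 1) (hX₀ : 0 ≤ X) (hX₁ : X ≤ 1) :
    re (ρ * (1 - CFC.sqrt X) ^ 2).trace ≤ 1 - re (ρ * X).trace := by
  have := re_trace_mul_le_of_le (CFC.one_sub_sqrt_sq_le hX₀ hX₁) hρ
  rwa [mul_sub ρ 1 X, mul_one, trace_sub, hρtr, map_sub, one_re] at this

lemma re_trace_abs_sub_sqrt_mul_mul_sqrt_le {ρ X : Matrix n n 𝕜} (hρ : ρ.PosSemidef)
    (hρtr : ρ.trace = 1) (hX₀ : 0 ≤ X) (hX₁ : X ≤ 1) :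
    re (CFC.abs (ρ - CFC.sqrt X * ρ * CFC.sqrt X)).trace ≤ 2 * √(1 - re (ρ * X).trace) := by
  set Y := CFC.sqrt X
  have hY : Yᴴ = Y := (CFC.sqrt_nonneg X).isSelfAdjoint
  have hT : (1 - Y)ᴴ = 1 - Y := by rw [conjTranspose_sub, conjTranspose_one, hY]
  obtain ⟨S, hS, hSA⟩ := IsHermitian.exists_mem_unitary_mul_eq_abs (A := ρ - Y * ρ * Y) <|
    hρ.isHermitian.sub (by simpa only [hY] using (hρ.conjTranspose_mul_mul_same Y).isHermitian)
  have hXρ : re (ρ * X).trace ≤ 1 := by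
    simpa [hρtr] using re_trace_mul_le_of_le hX₁ hρ
  have h₁ : ‖(S * (1 - Y) * ρ * 1).trace‖ ≤ √(re (ρ * (1 - Y) ^ 2).trace) := by
    have := norm_trace_unitary_mul_mul_mul_le hρ hS (1 - Y) 1
    simp only [hT, conjTranspose_one, mul_one, hρtr, one_re, Real.sqrt_one] at this ⊢
    rwa [← sq] at this
  have h₂ : ‖(S * Y * ρ * (1 - Y)).trace‖ ≤ √(re (ρ * (1 - Y) ^ 2).trace) := by
    have := norm_trace_unitary_mul_mul_mul_le hρ hS Y (1 - Y)
    rw [hT, ← sq, hY, CFC.sqrt_mul_sqrt_self X] at this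
    exact this.trans (mul_le_of_le_one_left (Real.sqrt_nonneg _) (Real.sqrt_le_one.mpr hXρ))
  calc re (CFC.abs (ρ - Y * ρ * Y)).trace
      = re ((S * (1 - Y) * ρ * 1).trace + (S * Y * ρ * (1 - Y)).trace) := by
        rw [← hSA, ← trace_add]
        congr 2
        noncomm_ring
    _ ≤ ‖(S * (1 - Y) * ρ * 1).trace‖ + ‖(S * Y * ρ * (1 - Y)).trace‖ :=
        (re_le_norm _).trans (norm_add_le _ _)
    _ ≤ 2 * √(1 - re (ρ * X).trace) := by
        linarith [Real.sqrt_le_sqrt (re_trace_mul_one_sub_sqrt_sq_le hρ hρtr hX₀ hX₁)]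

end Matrix

namespace QIT

open Matrix

lemma traceNorm_eq_re_trace_abs {d : ℕ} (A : Matrix (Fin d) (Fin d) ℂ) :
    traceNorm A = (CFC.abs A).trace.re := by
  rw [traceNorm, PosSemidef.sqrt_eq_cfcSqrt, CFC.abs, star_eq_conjTranspose]

theorem tender_operator_general {D : ℕ} (ρ X : Matrix (Fin D) (Fin D) ℂ)
    (hρ : IsDensity ρ) (hX : X.PosSemidef) (hX1 : (1 - X).PosSemidef)
    (lam : ℝ) (hlam : 1 - ((ρ * X).trace).re ≤ lam) :
    traceNorm (ρ - hX.sqrt * ρ * hX.sqrt) ≤ Real.sqrt (8 * lam) := by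
  rw [traceNorm_eq_re_trace_abs, hX.sqrt_eq_cfcSqrt]
  calc (CFC.abs (ρ - CFC.sqrt X * ρ * CFC.sqrt X)).trace.re
      ≤ 2 * √(1 - (ρ * X).trace.re) :=
        re_trace_abs_sub_sqrt_mul_mul_sqrt_le hρ.1 hρ.2 (nonneg_iff_posSemidef.mpr hX) hX1
    _ ≤ 2 * √lam := by gcongr
    _ ≤ √(8 * lam) := by
        rw [Real.sqrt_mul (by norm_num)]
        gcongr
        exact Real.le_sqrt_of_sq_le (by norm_num)

/-- Tender operator lemma: if `0 ≤ X ≤ I` and `1 − Tr(ρX) ≤ λ ≤ 1`, then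
`‖ρ − √X ρ √X‖₁ ≤ √(8λ)`. -/
theorem tender_operator {D : ℕ} (ρ X : Matrix (Fin D) (Fin D) ℂ)
    (hρ : IsDensity ρ) (hX : X.PosSemidef) (hX1 : (1 - X).PosSemidef)
    (lam : ℝ) (hlam : 1 - ((ρ * X).trace).re ≤ lam) (hlam1 : lam ≤ 1) :
    traceNorm (ρ - hX.sqrt * ρ * hX.sqrt) ≤ Real.sqrt (8 * lam) :=
  tender_operator_general ρ X hρ hX hX1 lam hlam

end QIT
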